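/- Let (V',η) be a degenerate conic representation of a topological group G, let φ : (V',η) → (V,τ) be a surjective homomorphism of conic representations, and let Q be a compact section of V with induced multiplier σ. Then there exist real numbers 0 < a < b such that a < σ(g,x) < b for all g ∈ G and x ∈ Q. -/

import Mathlib

open Set

/-- `Q` is a section of the cone `V`, defined by the continuous conic (additive, positively
homogeneous, nonnegative) function `L`, which is strictly positive away from `0`. -/
structure IsConicSection {X : Type*} [AddCommGroup X] [Module ℝ X] [TopologicalSpace X]
    (V : Set X) (L : X → ℝ) (Q : Set X) : Prop where
  continuousOn : ContinuousOn L V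
  nonneg : ∀ x ∈ V, 0 ≤ L x
  map_add : ∀ x ∈ V, ∀ y ∈ V, L (x + y) = L x + L y
  map_smul : ∀ x ∈ V, ∀ a : ℝ, 0 ≤ a → L (a • x) = a * L x
  pos : ∀ x ∈ V, x ≠ 0 → 0 < L x
  sect_eq : Q = {x ∈ V | L x = 1}

/-- A conic representation of a topological group `G`: a nonzero cone `V` (a subset of a real
topological vector space closed under nonnegative linear combinations) admitting a compact
section, together with a continuous action `τ` of `G` on `V` by maps preserving nonnegative
linear combinations. -/
structure IsConicRep (G : Type*) {X : Type*} [Group G] [TopologicalSpace G]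
    [AddCommGroup X] [Module ℝ X] [TopologicalSpace X]
    (V : Set X) (τ : G → X → X) : Prop where
  nonempty : V.Nonempty
  ne_zero : V ≠ {0}
  cone : ∀ x ∈ V, ∀ y ∈ V, ∀ a b : ℝ, 0 ≤ a → 0 ≤ b → a • x + b • y ∈ V
  mapsTo : ∀ g : G, MapsTo (τ g) V V
  continuousOn : ContinuousOn (fun p : G × X => τ p.1 p.2) (univ ×ˢ V)
  act_one : ∀ x ∈ V, τ 1 x = x
  act_mul : ∀ g h : G, ∀ x ∈ V, τ (g * h) x = τ g (τ h x)
  conic_act : ∀ g : G, ∀ x ∈ V, ∀ y ∈ V, ∀ a b : ℝ, 0 ≤ a → 0 ≤ b →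
    τ g (a • x + b • y) = a • τ g x + b • τ g y
  exists_compact_section : ∃ (L : X → ℝ) (Q : Set X), IsConicSection V L Q ∧ IsCompact Q

/-- A homomorphism of conic representations of `G`: a continuous map preserving nonnegative
linear combinations, vanishing only at `0`, and commuting with the group actions. -/
structure IsConicHom (G : Type*) {X₁ X₂ : Type*} [Group G]
    [AddCommGroup X₁] [Module ℝ X₁] [TopologicalSpace X₁]
    [AddCommGroup X₂] [Module ℝ X₂] [TopologicalSpace X₂]
    (V₁ : Set X₁) (τ : G → X₁ → X₁) (V₂ : Set X₂) (η : G → X₂ → X₂)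
    (φ : X₁ → X₂) : Prop where
  continuousOn : ContinuousOn φ V₁
  mapsTo : MapsTo φ V₁ V₂
  conic : ∀ x ∈ V₁, ∀ y ∈ V₁, ∀ a b : ℝ, 0 ≤ a → 0 ≤ b →
    φ (a • x + b • y) = a • φ x + b • φ y
  ne_zero : ∀ x ∈ V₁, x ≠ 0 → φ x ≠ 0
  equivariant : ∀ g : G, ∀ x ∈ V₁, φ (τ g x) = η g (φ x)

/-- A conic representation is irreducible if its only nonzero closed `G`-invariant subcone
is the whole cone. -/
def IsIrreducibleConicRep (G : Type*) {X : Type*} [Group G]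
    [AddCommGroup X] [Module ℝ X] [TopologicalSpace X]
    (V : Set X) (τ : G → X → X) : Prop :=
  ∀ W : Set X, W ⊆ V → W.Nonempty → W ≠ {0} → IsClosed W →
    (∀ x ∈ W, ∀ y ∈ W, ∀ a b : ℝ, 0 ≤ a → 0 ≤ b → a • x + b • y ∈ W) →
    (∀ g : G, MapsTo (τ g) W W) → W = V

/-- A conic representation is degenerate if it admits a `G`-invariant section. -/
def IsDegenerateConicRep (G : Type*) {X : Type*} [Group G]
    [AddCommGroup X] [Module ℝ X] [TopologicalSpace X]
    (V : Set X) (τ : G → X → X) : Prop :=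
  ∃ (L : X → ℝ) (Q : Set X), IsConicSection V L Q ∧ ∀ g : G, MapsTo (τ g) Q Q

/-!
Pull the multiplier back to `V'` along `φ`: `f = L ∘ φ` is continuous, positively homogeneous
and positive away from `0`. Since `V'` has a compact section, every section of `V'` is compact
(it is the image of the compact one under `z ↦ z / L' z`), in particular the `η`-invariant
section `Q'`, so `m < f < M` on `Q'` for some `0 < m < M`. A point `x ∈ Q` lifts to `y ∈ Q'`
with `φ y = t • x`; then `f y = t` and `f (η_g y) = t · L (τ_g x)` with `η_g y ∈ Q'`, so
`L (τ_g x)` lies between `m / M` and `M / m`.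
-/

section

variable {X : Type*} [AddCommGroup X] [Module ℝ X] [TopologicalSpace X]

namespace IsConicSection

variable {V Q : Set X} {L : X → ℝ}

theorem subset (h : IsConicSection V L Q) : Q ⊆ V := by
  rw [h.sect_eq]
  exact fun _ hx => hx.1

theorem apply_eq_one (h : IsConicSection V L Q) {x : X} (hx : x ∈ Q) : L x = 1 := by
  rw [h.sect_eq] at hx
  exact hx.2

theorem ne_zero_of_mem (h : IsConicSection V L Q) {x : X} (hx : x ∈ Q) : x ≠ 0 := by
  rintro rfl
  have h0 := h.map_smul 0 (h.subset hx) 0 le_rfl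
  rw [zero_smul, zero_mul, h.apply_eq_one hx] at h0
  exact one_ne_zero h0

theorem inv_smul_mem (h : IsConicSection V L Q) (hV : ∀ x ∈ V, ∀ a : ℝ, 0 ≤ a → a • x ∈ V)
    {x : X} (hx : x ∈ V) (hx0 : x ≠ 0) : (L x)⁻¹ • x ∈ Q := by
  have hLx := h.pos x hx hx0
  rw [h.sect_eq]
  refine ⟨hV x hx _ (inv_nonneg.2 hLx.le), ?_⟩
  rw [h.map_smul x hx _ (inv_nonneg.2 hLx.le), inv_mul_cancel₀ hLx.ne']

theorem isCompact_of_isCompact [ContinuousSMul ℝ X] {L₀ : X → ℝ} {Q₀ : Set X}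
    (hV : ∀ x ∈ V, ∀ a : ℝ, 0 ≤ a → a • x ∈ V) (h : IsConicSection V L Q)
    (h₀ : IsConicSection V L₀ Q₀) (hQ₀ : IsCompact Q₀) : IsCompact Q := by
  have himage : (fun x => (L x)⁻¹ • x) '' Q₀ = Q := by
    apply Subset.antisymm
    · rintro _ ⟨x, hx, rfl⟩
      exact h.inv_smul_mem hV (h₀.subset hx) (h₀.ne_zero_of_mem hx)
    · intro x hx
      have hxV := h.subset hx
      have hL₀x := h₀.pos x hxV (h.ne_zero_of_mem hx)
      refine ⟨(L₀ x)⁻¹ • x, h₀.inv_smul_mem hV hxV (h.ne_zero_of_mem hx), ?_⟩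
      show (L _)⁻¹ • _ = x
      rw [h.map_smul x hxV _ (inv_nonneg.2 hL₀x.le), h.apply_eq_one hx, mul_one, inv_inv,
        smul_smul, mul_inv_cancel₀ hL₀x.ne', one_smul]
  rw [← himage]
  refine hQ₀.image_of_continuousOn ((ContinuousOn.inv₀ ?_ ?_).smul continuousOn_id)
  · exact h.continuousOn.mono h₀.subset
  · exact fun x hx => (h.pos x (h₀.subset hx) (h₀.ne_zero_of_mem hx)).ne'

end IsConicSection

theorem IsConicRep.smul_mem {G : Type*} [Group G] [TopologicalSpace G] {V : Set X}
    {τ : G → X → X} (h : IsConicRep G V τ) : ∀ x ∈ V, ∀ a : ℝ, 0 ≤ a → a • x ∈ V := by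
  intro x hx a ha
  simpa using h.cone x hx x hx a 0 ha le_rfl

theorem IsConicRep.map_smul {G : Type*} [Group G] [TopologicalSpace G] {V : Set X}
    {τ : G → X → X} (h : IsConicRep G V τ) (g : G) {x : X} (hx : x ∈ V) {a : ℝ} (ha : 0 ≤ a) :
    τ g (a • x) = a • τ g x := by
  simpa using h.conic_act g x hx x hx a 0 ha le_rfl

theorem IsConicHom.map_smul {G X' : Type*} [Group G] [AddCommGroup X'] [Module ℝ X']
    [TopologicalSpace X'] {V' : Set X'} {η : G → X' → X'} {V : Set X} {τ : G → X → X}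
    {φ : X' → X} (h : IsConicHom G V' η V τ φ) {y : X'} (hy : y ∈ V') {a : ℝ} (ha : 0 ≤ a) :
    φ (a • y) = a • φ y := by
  simpa using h.conic y hy y hy a 0 ha le_rfl

end

theorem IsCompact.exists_pos_forall_mem_Ioo {Y : Type*} [TopologicalSpace Y] {s : Set Y}
    {f : Y → ℝ} (hs : IsCompact s) (hf : ContinuousOn f s) (hpos : ∀ y ∈ s, 0 < f y) :
    ∃ m M : ℝ, 0 < m ∧ m < M ∧ ∀ y ∈ s, f y ∈ Ioo m M := by
  obtain ⟨m, hm, hmf⟩ := hs.exists_forall_le' hf hpos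
  obtain ⟨B, hB⟩ := hs.bddAbove_image hf
  refine ⟨m / 2, max B m + 1, by positivity, by linarith [le_max_right B m], fun y hy => ?_⟩
  have hfB : f y ≤ B := hB (mem_image_of_mem f hy)
  exact ⟨by linarith [hmf y hy], by linarith [le_max_left B m]⟩

theorem div_lt_and_lt_div_of_mul_mem_Ioo {m M t s : ℝ} (hm : 0 < m) (ht : t ∈ Ioo m M)
    (hts : t * s ∈ Ioo m M) : m / M < s ∧ s < M / m := by
  obtain ⟨hmt, htM⟩ := ht
  obtain ⟨hmts, htsM⟩ := hts
  have hM : 0 < M := by linarith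
  rw [div_lt_iff₀ hM, lt_div_iff₀ hm]
  constructor <;> nlinarith

theorem stmt_14_general {G X' X : Type*} [Group G] [TopologicalSpace G]
    [AddCommGroup X'] [Module ℝ X'] [TopologicalSpace X'] [ContinuousSMul ℝ X']
    [AddCommGroup X] [Module ℝ X] [TopologicalSpace X]
    (V' : Set X') (η : G → X' → X') (hrep' : IsConicRep G V' η)
    (hdeg : IsDegenerateConicRep G V' η)
    (V : Set X) (τ : G → X → X)
    (φ : X' → X) (hφ : IsConicHom G V' η V τ φ) (hφsurj : φ '' V' = V)
    (L : X → ℝ) (Q : Set X) (hsec : IsConicSection V L Q) :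
    ∃ a b : ℝ, 0 < a ∧ a < b ∧
      ∀ g : G, ∀ x ∈ Q, a < L (τ g x) ∧ L (τ g x) < b := by
  obtain ⟨L', Q', hsec', hinv⟩ := hdeg
  obtain ⟨L₀, Q₀, hsec₀, hQ₀⟩ := hrep'.exists_compact_section
  have hf_pos : ∀ y ∈ Q', 0 < L (φ y) := fun y hy => hsec.pos _ (hφ.mapsTo (hsec'.subset hy))
    (hφ.ne_zero _ (hsec'.subset hy) (hsec'.ne_zero_of_mem hy))
  obtain ⟨m, M, hm, hmM, hbound⟩ : ∃ m M : ℝ, 0 < m ∧ m < M ∧ ∀ y ∈ Q', L (φ y) ∈ Ioo m M :=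
    (hsec'.isCompact_of_isCompact hrep'.smul_mem hsec₀ hQ₀).exists_pos_forall_mem_Ioo
      ((hsec.continuousOn.comp hφ.continuousOn hφ.mapsTo).mono hsec'.subset) hf_pos
  refine ⟨m / M, M / m, div_pos hm (by linarith), by
    rw [div_lt_div_iff₀ (by linarith) hm]; nlinarith, fun g x hx => ?_⟩
  obtain ⟨y, hy, rfl⟩ : x ∈ φ '' V' := hφsurj ▸ hsec.subset hx
  have hy0 : y ≠ 0 := by
    rintro rfl
    exact hsec.ne_zero_of_mem hx (by simpa using hφ.map_smul hy (le_refl (0 : ℝ)))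
  have ht : 0 ≤ (L' y)⁻¹ := inv_nonneg.2 (hsec'.nonneg y hy)
  have hf_smul : ∀ z ∈ V', L (φ ((L' y)⁻¹ • z)) = (L' y)⁻¹ * L (φ z) := fun z hz => by
    rw [hφ.map_smul hz ht, hsec.map_smul _ (hφ.mapsTo hz) _ ht]
  have hty : (L' y)⁻¹ • y ∈ Q' := hsec'.inv_smul_mem hrep'.smul_mem hy hy0
  have h_lift := hbound _ hty
  have h_act := hbound _ (hinv g hty)
  rw [hf_smul y hy, hsec.apply_eq_one hx, mul_one] at h_lift
  rw [hrep'.map_smul g hy ht, hf_smul _ (hrep'.mapsTo g hy), hφ.equivariant g y hy] at h_act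
  exact div_lt_and_lt_div_of_mul_mem_Ioo hm h_lift h_act

/-- Let `(V',η)` be a degenerate conic representation of a topological group
`G`, let `φ : (V',η) → (V,τ)` be a surjective homomorphism of conic representations, and let
`Q` be a compact section of `V` with induced multiplier `σ(g,x) = L(τ_g x)`.  Then there exist
real numbers `0 < a < b` such that `a < σ(g,x) < b` for all `g ∈ G` and `x ∈ Q`. -/
theorem stmt_14 {G X' X : Type*} [Group G] [TopologicalSpace G] [IsTopologicalGroup G]
    [AddCommGroup X'] [Module ℝ X'] [TopologicalSpace X']
    [IsTopologicalAddGroup X'] [ContinuousSMul ℝ X'] [T2Space X'] [SeparatingDual ℝ X']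
    [AddCommGroup X] [Module ℝ X] [TopologicalSpace X]
    [IsTopologicalAddGroup X] [ContinuousSMul ℝ X] [T2Space X] [SeparatingDual ℝ X]
    (V' : Set X') (η : G → X' → X') (hrep' : IsConicRep G V' η)
    (hdeg : IsDegenerateConicRep G V' η)
    (V : Set X) (τ : G → X → X) (hrep : IsConicRep G V τ)
    (φ : X' → X) (hφ : IsConicHom G V' η V τ φ) (hφsurj : φ '' V' = V)
    (L : X → ℝ) (Q : Set X) (hsec : IsConicSection V L Q) (hQcomp : IsCompact Q) :
    ∃ a b : ℝ, 0 < a ∧ a < b ∧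
      ∀ g : G, ∀ x ∈ Q, a < L (τ g x) ∧ L (τ g x) < b :=
  stmt_14_general V' η hrep' hdeg V τ φ hφ hφsurj L Q hsec
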